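/- arXiv:1407.1966 — 4 statements merged into one kernel-verified Lean document; each statement's English description precedes it below -/
import Mathlib

section
/- Let G be a finite abelian group and W ⊆ ℤ a nonempty set of weights. Then the sequence (D_{W,m}(G))_{m∈ℕ} is eventually an arithmetic progression with common difference e_W(G); that is, there exist M ∈ ℕ and c ∈ ℤ such that D_{W,m}(G) = c + m·e_W(G) for every m ≥ M. -/
open scoped BigOperators

/-- `l` encodes a `W`-weighted zero-subsum of the sequence (multiset) `S`:
a nonempty list of (weight, group element) pairs with weights in `W`, whose
group elements form a sub-multiset of `S` and whose weighted sum is zero. -/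
def IsWZeroSubsum {G : Type*} [AddCommGroup G] (W : Set ℤ) (S : Multiset G)
    (l : List (ℤ × G)) : Prop :=
  l ≠ [] ∧ (∀ p ∈ l, p.1 ∈ W) ∧ (↑(l.map Prod.snd) : Multiset G) ≤ S ∧
    (l.map fun p => p.1 • p.2).sum = 0

/-- `S` has a `W`-weighted zero-subsum whose length lies in `L`. -/
def HasWZeroSubsumLen {G : Type*} [AddCommGroup G] (W : Set ℤ) (S : Multiset G)
    (L : Set ℕ) : Prop :=
  ∃ l : List (ℤ × G), IsWZeroSubsum W S l ∧ l.length ∈ L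

/-- `S` has `m` pairwise disjoint `W`-weighted zero-subsums. -/
def HasDisjointWZeroSubsums {G : Type*} [AddCommGroup G] (W : Set ℤ) (S : Multiset G)
    (m : ℕ) : Prop :=
  ∃ ls : List (List (ℤ × G)), ls.length = m ∧
    (∀ l ∈ ls, l ≠ [] ∧ (∀ p ∈ l, p.1 ∈ W) ∧ (l.map fun p => p.1 • p.2).sum = 0) ∧
    (↑(ls.flatten.map Prod.snd) : Multiset G) ≤ S

/-- The `m`-wise `W`-weighted Davenport constant `D_{W,m}(G)`. -/
noncomputable def DW (W : Set ℤ) (G : Type*) [AddCommGroup G] (m : ℕ) : ℕ :=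
  sInf {n : ℕ | ∀ S : Multiset G, n ≤ Multiset.card S → HasDisjointWZeroSubsums W S m}

/-- The `L`-constrained `W`-weighted Davenport constant `s_{W,L}(G)`, valued in `ℕ∞`. -/
noncomputable def sWL (W : Set ℤ) (G : Type*) [AddCommGroup G] (L : Set ℕ) : ℕ∞ :=
  sInf {N : ℕ∞ | ∃ n : ℕ, N = (n : ℕ∞) ∧
    ∀ S : Multiset G, n ≤ Multiset.card S → HasWZeroSubsumLen W S L}

/-- The `d`-constrained `W`-weighted Davenport constant `s_{W,≤d}(G)`. -/
noncomputable def sWle (W : Set ℤ) (G : Type*) [AddCommGroup G] (d : ℕ) : ℕ∞ :=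
  sWL W G {t | 1 ≤ t ∧ t ≤ d}

/-- `e_W(G)`: the smallest `t ≥ 1` such that some `t` weights from `W` sum to a
multiple of `exp(G)`. -/
noncomputable def eW (W : Set ℤ) (G : Type*) [AddCommGroup G] : ℕ :=
  sInf {t : ℕ | 1 ≤ t ∧ ∃ w : Fin t → ℤ, (∀ i, w i ∈ W) ∧
    ((AddMonoid.exponent G : ℤ) ∣ ∑ i, w i)}

/-- `W` is multiplicatively closed modulo `n`. -/
def MulClosedMod (W : Set ℤ) (n : ℕ) : Prop :=
  ∀ w ∈ W, ∀ w' ∈ W, ∃ u ∈ W, (n : ℤ) ∣ w * w' - u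

/-!
Write `e = e_W(G)`. Choosing `e` weights whose sum is a multiple of `exp(G)`, any `e` equal terms
`g` form a zero-subsum, so by pigeonhole every sequence longer than `|G| (e - 1)` sheds a
zero-subsum of length `e`; hence `D_{W,m+1} ≤ D_{W,m} + e` as soon as `D_{W,m} > |G| (e - 1)`.
Conversely, in a constant sequence at an element of order `exp(G)` every zero-subsum has length
at least `e`, so `D_{W,m} ≥ m e`. Thus `D_{W,m} - m e` is eventually a non-increasing sequence of
natural numbers, hence eventually constant.
-/
theorem Multiset.exists_lt_count_of_card_mul_lt {α : Type*} [Fintype α] [DecidableEq α]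
    {S : Multiset α} {k : ℕ} (h : Fintype.card α * k < Multiset.card S) :
    ∃ a, k < S.count a := by
  by_contra! hle
  have : Multiset.card S ≤ Fintype.card α * k := calc
    Multiset.card S = ∑ a, S.count a :=
        (Multiset.sum_count_eq_card fun a _ => Finset.mem_univ a).symm
    _ ≤ Finset.univ.card • k := Finset.sum_le_card_nsmul _ _ _ fun a _ => hle a
    _ = Fintype.card α * k := by rw [Finset.card_univ, smul_eq_mul]
  omega

section

variable {G : Type*} [AddCommGroup G] {W : Set ℤ}

theorem eW_le {t : ℕ} (ht : 1 ≤ t) (w : Fin t → ℤ) (hwW : ∀ i, w i ∈ W)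
    (hw : (AddMonoid.exponent G : ℤ) ∣ ∑ i, w i) : eW W G ≤ t :=
  Nat.sInf_le ⟨ht, w, hwW, hw⟩

theorem eW_spec [Finite G] (hW : W.Nonempty) :
    1 ≤ eW W G ∧ ∃ w : Fin (eW W G) → ℤ, (∀ i, w i ∈ W) ∧
      (AddMonoid.exponent G : ℤ) ∣ ∑ i, w i := by
  obtain ⟨w₀, hw₀⟩ := hW
  refine Nat.sInf_mem (s := {t | 1 ≤ t ∧ ∃ w : Fin t → ℤ, (∀ i, w i ∈ W) ∧
    (AddMonoid.exponent G : ℤ) ∣ ∑ i, w i}) ⟨AddMonoid.exponent G,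
    Nat.one_le_iff_ne_zero.mpr AddMonoid.exponent_ne_zero_of_finite, fun _ => w₀, fun _ => hw₀,
    ⟨w₀, ?_⟩⟩
  simp [mul_comm]

theorem one_le_eW [Finite G] (hW : W.Nonempty) : 1 ≤ eW W G := (eW_spec hW).1

/-- Any `eW W G` weights summing to a multiple of the exponent kill every element. -/
theorem exists_wZeroSubsum_replicate_eW [Finite G] (hW : W.Nonempty) (g : G) :
    ∃ l : List (ℤ × G), l ≠ [] ∧ (∀ p ∈ l, p.1 ∈ W) ∧ (l.map fun p => p.1 • p.2).sum = 0 ∧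
      l.map Prod.snd = List.replicate (eW W G) g := by
  obtain ⟨he, w, hwW, hw⟩ := eW_spec (G := G) hW
  refine ⟨List.ofFn fun i => (w i, g), ?_, ?_, ?_, ?_⟩
  · rw [← List.length_pos_iff, List.length_ofFn]
    exact he
  · simp only [List.mem_ofFn, forall_exists_index]
    rintro _ i rfl
    exact hwW i
  · rw [List.map_ofFn, List.sum_ofFn]
    simp only [Function.comp_def, ← Finset.sum_smul]
    exact AddGroup.exponent_dvd_iff_forall_zsmul_eq_zero.mp hw g
  · rw [List.map_ofFn]
    exact List.ofFn_const _ g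

theorem HasDisjointWZeroSubsums.succ_of_replicate_le [Finite G] [DecidableEq G]
    (hW : W.Nonempty) {S : Multiset G} {g : G} {m : ℕ}
    (hg : Multiset.replicate (eW W G) g ≤ S)
    (h : HasDisjointWZeroSubsums W (S - Multiset.replicate (eW W G) g) m) :
    HasDisjointWZeroSubsums W S (m + 1) := by
  obtain ⟨l, hne, hlW, hsum, hl⟩ := exists_wZeroSubsum_replicate_eW hW g
  obtain ⟨ls, hlen, hls, hle⟩ := h
  refine ⟨l :: ls, by rw [List.length_cons, hlen], ?_, ?_⟩
  · simp only [List.mem_cons, forall_eq_or_imp]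
    exact ⟨⟨hne, hlW, hsum⟩, hls⟩
  · rw [List.flatten_cons, List.map_append, ← Multiset.coe_add, hl, Multiset.coe_replicate]
    exact (le_tsub_iff_left hg).mp hle

theorem HasDisjointWZeroSubsums.zero (S : Multiset G) : HasDisjointWZeroSubsums W S 0 :=
  ⟨[], rfl, by simp, by simp⟩

/-- By pigeonhole, a sequence longer than `|G| (e - 1)` repeats some element `e` times. -/
theorem hasDisjointWZeroSubsums_succ_of_forall [Fintype G] (hW : W.Nonempty) {n m : ℕ}
    (hn : ∀ S : Multiset G, n ≤ Multiset.card S → HasDisjointWZeroSubsums W S m)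
    (hbig : Fintype.card G * (eW W G - 1) < n + eW W G) (S : Multiset G)
    (hS : n + eW W G ≤ Multiset.card S) : HasDisjointWZeroSubsums W S (m + 1) := by
  classical
  have he := one_le_eW (G := G) hW
  obtain ⟨g, hg⟩ :=
    Multiset.exists_lt_count_of_card_mul_lt (S := S) (k := eW W G - 1) (by omega)
  have hrep : Multiset.replicate (eW W G) g ≤ S :=
    Multiset.le_count_iff_replicate_le.mp (by omega)
  refine .succ_of_replicate_le hW hrep (hn _ ?_)
  rw [Multiset.card_sub hrep, Multiset.card_replicate]
  omega

theorem hasDisjointWZeroSubsums_of_card_le [Fintype G] (hW : W.Nonempty) (m : ℕ)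
    (S : Multiset G) (hS : Fintype.card G * (eW W G - 1) + 1 + m * eW W G ≤ Multiset.card S) :
    HasDisjointWZeroSubsums W S m := by
  induction m generalizing S with
  | zero => exact .zero S
  | succ m ih =>
    refine hasDisjointWZeroSubsums_succ_of_forall hW ih (by omega) S ?_
    rwa [add_mul, one_mul, ← add_assoc] at hS

theorem hasDisjointWZeroSubsums_of_DW_le [Fintype G] (hW : W.Nonempty) (m : ℕ)
    (S : Multiset G) (hS : DW W G m ≤ Multiset.card S) : HasDisjointWZeroSubsums W S m :=
  Nat.sInf_mem
    (s := {n | ∀ S : Multiset G, n ≤ Multiset.card S → HasDisjointWZeroSubsums W S m})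
    ⟨_, hasDisjointWZeroSubsums_of_card_le hW m⟩ S hS

theorem DW_succ_le [Fintype G] (hW : W.Nonempty) {m : ℕ}
    (h : Fintype.card G * (eW W G - 1) < DW W G m) : DW W G (m + 1) ≤ DW W G m + eW W G :=
  Nat.sInf_le <| hasDisjointWZeroSubsums_succ_of_forall hW
    (hasDisjointWZeroSubsums_of_DW_le hW m) (by omega)

theorem eW_le_length {g : G} (hg : addOrderOf g = AddMonoid.exponent G) {l : List (ℤ × G)}
    (hne : l ≠ []) (hlW : ∀ p ∈ l, p.1 ∈ W) (hl : ∀ p ∈ l, p.2 = g)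
    (hsum : (l.map fun p => p.1 • p.2).sum = 0) : eW W G ≤ l.length := by
  have hsum' : (l.map Prod.fst).sum • g = 0 := by
    rw [List.sum_smul, List.map_map, ← hsum]
    exact congrArg List.sum (List.map_congr_left fun p hp => by simp [hl p hp])
  refine eW_le (List.length_pos_iff.mpr hne) (fun i : Fin l.length => l[(i : ℕ)].1)
    (fun i => hlW _ (List.getElem_mem _)) ?_
  rw [Fin.sum_univ_fun_getElem l Prod.fst, ← hg]
  exact addOrderOf_dvd_iff_zsmul_eq_zero.mpr hsum'

/-- Witnessed by a constant sequence at an element of maximal order. -/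
theorem mul_eW_le_DW [Fintype G] (hW : W.Nonempty) (m : ℕ) : m * eW W G ≤ DW W G m := by
  obtain ⟨g, hg⟩ :=
    AddMonoid.exists_addOrderOf_eq_exponent (AddMonoid.ExponentExists.of_finite (G := G))
  obtain ⟨ls, hlen, hls, hle⟩ :=
    hasDisjointWZeroSubsums_of_DW_le hW m (Multiset.replicate (DW W G m) g) (by simp)
  have hsnd (l) (hl : l ∈ ls) (p) (hp : p ∈ l) : p.2 = g :=
    Multiset.eq_of_mem_replicate <| Multiset.mem_of_le hle <|
      Multiset.mem_coe.mpr (List.mem_map_of_mem (List.mem_flatten.mpr ⟨l, hl, hp⟩))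
  have hlen_ge (n) (hn : n ∈ ls.map List.length) : eW W G ≤ n := by
    obtain ⟨l, hl, rfl⟩ := List.mem_map.mp hn
    obtain ⟨hne, hlW, hsum⟩ := hls l hl
    exact eW_le_length hg hne hlW (hsnd l hl) hsum
  calc m * eW W G = (ls.map List.length).length • eW W G := by
        rw [List.length_map, hlen, smul_eq_mul]
    _ ≤ (ls.map List.length).sum := List.card_nsmul_le_sum _ _ hlen_ge
    _ = Multiset.card (ls.flatten.map Prod.snd : Multiset G) := by
        simp [List.length_flatten, Function.comp_def]
    _ ≤ DW W G m := (Multiset.card_le_card hle).trans (by simp)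

end

theorem Nat.exists_eq_add_mul_of_succ_le {a : ℕ → ℕ} {e M₀ : ℕ} (hlow : ∀ m, m * e ≤ a m)
    (hstep : ∀ m, M₀ ≤ m → a (m + 1) ≤ a m + e) : ∃ M c, ∀ m, M ≤ m → a m = c + m * e := by
  have hanti : Antitone fun k => a (M₀ + k) - (M₀ + k) * e :=
    antitone_nat_of_succ_le fun k => by
      have := hstep (M₀ + k) (by omega)
      rw [← add_assoc, add_one_mul]
      omega
  obtain ⟨n, hn⟩ := WellFoundedLT.antitone_chain_condition hanti
  refine ⟨M₀ + n, a (M₀ + n) - (M₀ + n) * e, fun m hm => ?_⟩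
  have hm' := hn (m - M₀) (by omega)
  rw [show M₀ + (m - M₀) = m by omega] at hm'
  have := hlow m
  omega

/-- the sequence `m ↦ D_{W,m}(G)` is eventually an arithmetic
progression with common difference `e_W(G)`. -/
theorem stmt0 {G : Type*} [AddCommGroup G] [Fintype G] (W : Set ℤ) (hW : W.Nonempty) :
    ∃ (M : ℕ) (c : ℤ), ∀ m : ℕ, M ≤ m → (DW W G m : ℤ) = c + (m : ℤ) * (eW W G : ℤ) := by
  have hstep (m : ℕ) (hm : Fintype.card G * (eW W G - 1) + 1 ≤ m) :
      DW W G (m + 1) ≤ DW W G m + eW W G := by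
    refine DW_succ_le hW ?_
    have := Nat.le_mul_of_pos_right m (one_le_eW (G := G) hW)
    have := mul_eW_le_DW (G := G) hW m
    omega
  obtain ⟨M, c, hc⟩ := Nat.exists_eq_add_mul_of_succ_le (mul_eW_le_DW (G := G) hW) hstep
  exact ⟨M, c, fun m hm => by rw [hc m hm]; push_cast; rfl⟩
end

section
/- Let G be a finite abelian group, W ⊆ ℤ a nonempty set of weights, H a subgroup of G, and d ∈ ℕ. Then s_{W,≤d}(G) ≥ s_{W,≤d}(H) + s_{W,≤d}(G/H) − 1 (with the convention that the right-hand side is ∞ if either summand is ∞). -/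
open scoped BigOperators

/-!
Let `s = s_{W,≤d}(G)` be finite and let `T` be a sequence over `G ⧸ H` with no short
zero-subsum and `|T| ≥ s_{W,≤d}(G ⧸ H) - 1`. Lift `T` to a sequence `S` over `G` and append
any sequence `U` over `H` with `|U| ≥ s - |T|`. A short zero-subsum of `U + S` cannot involve
an element of `S`, since its image in `G ⧸ H` would be a short zero-subsum of `T`; so it lies
in `U`, and `s_{W,≤d}(H) ≤ s - |T| ≤ s - s_{W,≤d}(G ⧸ H) + 1`.
-/

section WeightedZeroSubsum

variable {W : Set ℤ} {G K : Type*} [AddCommGroup G] [AddCommGroup K]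

theorem not_hasWZeroSubsumLen_zero (L : Set ℕ) : ¬ HasWZeroSubsumLen W (0 : Multiset G) L := by
  rintro ⟨l, ⟨hne, -, hle, -⟩, -⟩
  exact hne (by simpa using hle)

theorem HasWZeroSubsumLen.of_zero_mem {d : ℕ} {S : Multiset G} {T : Multiset K}
    (h : HasWZeroSubsumLen W S {t | 1 ≤ t ∧ t ≤ d}) (h0 : (0 : K) ∈ T) :
    HasWZeroSubsumLen W T {t | 1 ≤ t ∧ t ≤ d} := by
  obtain ⟨_ | ⟨p, l⟩, ⟨hne, hW, -, -⟩, -, hd⟩ := h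
  · exact absurd rfl hne
  · exact ⟨[(p.1, 0)], ⟨by simp, by simpa using hW p (by simp), by simpa using h0, by simp⟩,
      le_rfl, by simp at hd ⊢; omega⟩

theorem IsWZeroSubsum.map (f : G →+ K) {S : Multiset G} {l : List (ℤ × G)}
    (h : IsWZeroSubsum W S l) : IsWZeroSubsum W (S.map f) (l.map (Prod.map id f)) := by
  obtain ⟨hne, hW, hle, hsum⟩ := h
  refine ⟨by simpa using hne, ?_, ?_, ?_⟩
  · simp only [List.mem_map]
    rintro _ ⟨p, hp, rfl⟩
    exact hW p hp
  · simpa [List.map_map, ← Multiset.map_coe] using Multiset.map_le_map (f := f) hle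
  · simpa [List.map_map, Function.comp_def, map_list_sum] using congrArg f hsum

theorem IsWZeroSubsum.of_map {f : G →+ K} (hf : Function.Injective f) {S : Multiset G}
    {l : List (ℤ × G)} (h : IsWZeroSubsum W (S.map f) (l.map (Prod.map id f))) :
    IsWZeroSubsum W S l := by
  obtain ⟨hne, hW, hle, hsum⟩ := h
  refine ⟨by simpa using hne, fun p hp => hW _ (List.mem_map_of_mem hp), ?_, ?_⟩
  · rw [← Multiset.map_le_map_iff hf, Multiset.map_coe]
    simpa [List.map_map, Function.comp_def] using hle
  · apply hf
    simpa [map_list_sum, List.map_map, Function.comp_def] using hsum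

theorem HasWZeroSubsumLen.map (f : G →+ K) {S : Multiset G} {L : Set ℕ}
    (h : HasWZeroSubsumLen W S L) : HasWZeroSubsumLen W (S.map f) L :=
  let ⟨_, hl, hlen⟩ := h
  ⟨_, hl.map f, by simpa using hlen⟩

theorem hasWZeroSubsumLen_map_iff {f : G →+ K} (hf : Function.Injective f) {S : Multiset G}
    {L : Set ℕ} : HasWZeroSubsumLen W (S.map f) L ↔ HasWZeroSubsumLen W S L := by
  refine ⟨fun ⟨l, hl, hlen⟩ => ?_, fun h => h.map f⟩
  have hrange : ∀ p ∈ l, ∃ g, f g = p.2 := fun p hp => by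
    have : p.2 ∈ S.map f :=
      Multiset.mem_of_le hl.2.2.1 (Multiset.mem_coe.2 (List.mem_map_of_mem hp))
    obtain ⟨g, -, hg⟩ := Multiset.mem_map.1 this
    exact ⟨g, hg⟩
  set l' := l.map (Prod.map id (Function.invFun f))
  have hl' : l'.map (Prod.map id f) = l := by
    rw [List.map_map]
    conv_rhs => rw [← List.map_id l]
    refine List.map_congr_left fun p hp => ?_
    exact Prod.ext rfl (Function.invFun_eq (hrange p hp))
  rw [← hl'] at hl hlen
  exact ⟨l', hl.of_map hf, by simpa using hlen⟩

theorem IsWZeroSubsum.filter_ne_zero [DecidableEq G] {S : Multiset G} {l : List (ℤ × G)}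
    (h : IsWZeroSubsum W S l) (hne : l.filter (fun p => p.2 ≠ 0) ≠ []) :
    IsWZeroSubsum W (S.filter (· ≠ 0)) (l.filter (fun p => p.2 ≠ 0)) := by
  obtain ⟨-, hW, hle, hsum⟩ := h
  refine ⟨hne, fun p hp => hW p (List.mem_of_mem_filter hp), ?_, ?_⟩
  · have := Multiset.filter_le_filter (· ≠ 0) hle
    rwa [Multiset.filter_coe, List.filter_map] at this
  · have hzero : ((l.filter fun p => ¬ p.2 ≠ 0).map fun p => p.1 • p.2).sum = 0 :=
      List.sum_eq_zero fun x hx => by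
        obtain ⟨p, hp, rfl⟩ := List.mem_map.1 hx
        simp_all [List.mem_filter]
    rwa [← List.sum_map_filter_add_sum_map_filter_not (fun p => p.2 ≠ 0), hzero,
      add_zero] at hsum

theorem HasWZeroSubsumLen.left_or_map_mk'_right {H : AddSubgroup G} {d : ℕ} {A B : Multiset G}
    (h : HasWZeroSubsumLen W (A + B) {t | 1 ≤ t ∧ t ≤ d}) (hA : ∀ a ∈ A, a ∈ H)
    (hB : ∀ b ∈ B, b ∉ H) :
    HasWZeroSubsumLen W A {t | 1 ≤ t ∧ t ≤ d} ∨
      HasWZeroSubsumLen W (B.map (QuotientAddGroup.mk' H)) {t | 1 ≤ t ∧ t ≤ d} := by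
  classical
  obtain ⟨l, hl, hlen⟩ := h
  set π := QuotientAddGroup.mk' H
  set lπ := (l.map (Prod.map id π)).filter (fun p => p.2 ≠ 0)
  by_cases hπ : lπ = []
  · left
    have hlH : ∀ g ∈ (l.map Prod.snd : Multiset G), g ∈ H := by
      simp only [Multiset.mem_coe, List.mem_map]
      rintro _ ⟨p, hp, rfl⟩
      simpa [π, QuotientAddGroup.eq_zero_iff] using
        List.filter_eq_nil_iff.1 hπ _ (List.mem_map_of_mem hp)
    refine ⟨l, ⟨hl.1, hl.2.1, ?_, hl.2.2.2⟩, hlen⟩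
    calc (l.map Prod.snd : Multiset G) = (l.map Prod.snd : Multiset G).filter (· ∈ H) :=
          (Multiset.filter_eq_self.2 hlH).symm
      _ ≤ (A + B).filter (· ∈ H) := Multiset.filter_le_filter _ hl.2.2.1
      _ = A := by
        rw [Multiset.filter_add, Multiset.filter_eq_self.2 hA, Multiset.filter_eq_nil.2 hB,
          add_zero]
  · right
    have hB' : ((A + B).map π).filter (· ≠ 0) = B.map π := by
      rw [Multiset.map_add, Multiset.filter_add, Multiset.filter_eq_nil.2,
        Multiset.filter_eq_self.2, zero_add]
      · simpa [π, QuotientAddGroup.eq_zero_iff] using hB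
      · simpa [π, QuotientAddGroup.eq_zero_iff] using hA
    refine ⟨lπ, hB' ▸ (hl.map π).filter_ne_zero hπ, List.length_pos_iff.2 hπ, ?_⟩
    exact (List.length_filter_le _ _).trans (by simpa using hlen.2)

end WeightedZeroSubsum

section DavenportConstant

variable {W : Set ℤ} {G K : Type*} [AddCommGroup G] [AddCommGroup K] {L : Set ℕ}

theorem sWL_le {n : ℕ}
    (h : ∀ S : Multiset G, n ≤ Multiset.card S → HasWZeroSubsumLen W S L) :
    sWL W G L ≤ n :=
  sInf_le ⟨n, rfl, h⟩

theorem exists_forall_hasWZeroSubsumLen_of_sWL_ne_top (h : sWL W G L ≠ ⊤) :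
    ∃ n : ℕ, sWL W G L = n ∧
      ∀ S : Multiset G, n ≤ Multiset.card S → HasWZeroSubsumLen W S L := by
  have hne : {N : ℕ∞ | ∃ n : ℕ, N = n ∧
      ∀ S : Multiset G, n ≤ Multiset.card S → HasWZeroSubsumLen W S L}.Nonempty :=
    Set.nonempty_iff_ne_empty.2 fun he => h (by rw [sWL, he, sInf_empty])
  exact csInf_mem hne

theorem exists_not_hasWZeroSubsumLen_of_sWL_eq {b : ℕ} (h : sWL W G L = b) :
    ∃ T : Multiset G, b - 1 ≤ Multiset.card T ∧ ¬ HasWZeroSubsumLen W T L := by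
  by_contra! hP
  have : b ≤ b - 1 := by exact_mod_cast h ▸ sWL_le hP
  exact not_hasWZeroSubsumLen_zero L (hP 0 (by simp; omega))

theorem sWL_le_sWL_of_surjective (f : G →+ K) (hf : Function.Surjective f) :
    sWL W K L ≤ sWL W G L := by
  refine le_sInf ?_
  rintro _ ⟨n, rfl, hG⟩
  refine sWL_le fun T hT => ?_
  have hS := hG (T.map (Function.surjInv hf)) (by simpa using hT)
  simpa [Multiset.map_map, Function.comp_def, Function.surjInv_eq hf] using hS.map f

theorem sWle_addSubgroup_le {H : AddSubgroup G} {d n : ℕ}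
    (hG : ∀ S : Multiset G, n ≤ Multiset.card S →
      HasWZeroSubsumLen W S {t | 1 ≤ t ∧ t ≤ d})
    {T : Multiset (G ⧸ H)} (hT : ¬ HasWZeroSubsumLen W T {t | 1 ≤ t ∧ t ≤ d}) :
    sWle W H d ≤ (n - Multiset.card T : ℕ) := by
  -- Some sequence over `G` has a short zero-subsum, so `0` alone would be one in `T`.
  have h0 : (0 : G ⧸ H) ∉ T := fun h0 =>
    hT ((hG _ (Multiset.card_replicate n 0).ge).of_zero_mem h0)
  set S := T.map Quotient.out
  have hS : ∀ g ∈ S, g ∉ H := by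
    simp only [S, Multiset.mem_map]
    rintro _ ⟨q, hq, rfl⟩ hH
    have hq0 : q = (0 : G ⧸ H) := by
      rw [← QuotientAddGroup.out_eq' q]
      exact (QuotientAddGroup.eq_zero_iff _).2 hH
    exact h0 (hq0 ▸ hq)
  have hST : S.map (QuotientAddGroup.mk' H) = T := by simp [S, Multiset.map_map]
  refine sWL_le fun U hU => ?_
  have hV := hG (U.map H.subtype + S) (by simp [S]; omega)
  rcases hV.left_or_map_mk'_right (by simp +contextual) hS with hU' | hT'
  · exact (hasWZeroSubsumLen_map_iff H.subtype_injective).1 hU'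
  · exact absurd (hST ▸ hT') hT

end DavenportConstant

theorem stmt6_general {G : Type*} [AddCommGroup G] (W : Set ℤ)
    (H : AddSubgroup G) (d : ℕ) :
    sWle W (↥H) d + sWle W (G ⧸ H) d ≤ sWle W G d + 1 := by
  by_cases htop : sWle W G d = ⊤
  · simp [htop]
  obtain ⟨n, hn, hG⟩ := exists_forall_hasWZeroSubsumLen_of_sWL_ne_top htop
  have hQG : sWle W (G ⧸ H) d ≤ n :=
    hn ▸ sWL_le_sWL_of_surjective _ (QuotientAddGroup.mk'_surjective H)
  obtain ⟨b, hb⟩ := ENat.ne_top_iff_exists.1 (ne_top_of_le_ne_top (ENat.natCast_ne_top n) hQG)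
  have hbn : b ≤ n := by exact_mod_cast hb ▸ hQG
  obtain ⟨T, hTb, hT⟩ := exists_not_hasWZeroSubsumLen_of_sWL_eq hb.symm
  calc sWle W H d + sWle W (G ⧸ H) d ≤ (n - Multiset.card T : ℕ) + b :=
        add_le_add (sWle_addSubgroup_le hG hT) hb.ge
    _ ≤ n + 1 := by norm_cast; omega
    _ = sWle W G d + 1 := by rw [sWle, hn]

/-- `s_{W,≤d}(G) ≥ s_{W,≤d}(H) + s_{W,≤d}(G/H) - 1`
(in `ℕ∞`, so the convention about infinite values is automatic). -/
theorem stmt6 {G : Type*} [AddCommGroup G] [Fintype G] (W : Set ℤ) (hW : W.Nonempty)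
    (H : AddSubgroup G) (d : ℕ) :
    sWle W (↥H) d + sWle W (G ⧸ H) d ≤ sWle W G d + 1 :=
  stmt6_general W H d
end

section
/- Let G be a finite abelian group, H a subgroup of G, m ≥ 1, and let W ⊆ ℤ be a nonempty set of weights that is multiplicatively closed modulo exp(G). Then D_{W,m}(G) ≤ D_{W, D_{W,m}(H)}(G/H). -/
open scoped BigOperators

/-! A long sequence `S` over `G` maps to a long sequence over `G ⧸ H`, which therefore has
`D_{W,m}(H)` disjoint weighted zero-subsums. Lifted to `G`, these become disjoint blocks of `S`
whose weighted sums lie in `H`; the sequence of these sums has `m` disjoint weighted zero-subsums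
in `H`. Expanding each of them block by block gives a weighted zero-subsum of `S`, since a product
of two weights is again a weight modulo `exp(G)`. -/

section Lift

variable {α β : Type*}

theorem Multiset.map_tsub_of_le [DecidableEq α] [DecidableEq β] (f : α → β)
    {S T : Multiset α} (h : T ≤ S) : (S - T).map f = S.map f - T.map f := by
  obtain ⟨U, rfl⟩ := Multiset.le_iff_exists_add.mp h
  simp only [Multiset.map_add, add_tsub_cancel_left]

theorem Multiset.bind_le_bind_of_le (f : α → Multiset β) {s t : Multiset α} (h : s ≤ t) :
    s.bind f ≤ t.bind f := by
  obtain ⟨u, rfl⟩ := Multiset.le_iff_exists_add.mp h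
  rw [Multiset.add_bind]
  exact le_self_add

theorem exists_list_lift_of_le_map (f : α → β) :
    ∀ (l : List (ℤ × β)) {S : Multiset α}, (↑(l.map Prod.snd) : Multiset β) ≤ S.map f →
      ∃ l' : List (ℤ × α), l'.map (Prod.map id f) = l ∧
        (↑(l'.map Prod.snd) : Multiset α) ≤ S
  | [], _, _ => ⟨[], rfl, Multiset.zero_le _⟩
  | (w, b) :: l, S, h => by
    classical
    have hb : b ∈ S.map f := Multiset.mem_of_le h (by simp)
    obtain ⟨a, haS, rfl⟩ := Multiset.mem_map.mp hb
    have hl : (↑(l.map Prod.snd) : Multiset β) ≤ (S.erase a).map f := by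
      rw [← Multiset.cons_le_cons_iff (f a), ← Multiset.map_cons, Multiset.cons_erase haS]
      simpa using h
    obtain ⟨l', rfl, hl'⟩ := exists_list_lift_of_le_map f l hl
    refine ⟨(w, a) :: l', rfl, ?_⟩
    simpa using (Multiset.cons_le_cons a hl').trans_eq (Multiset.cons_erase haS)

theorem exists_lists_lift_of_le_map (f : α → β) :
    ∀ (ls : List (List (ℤ × β))) {S : Multiset α},
      (↑(ls.flatten.map Prod.snd) : Multiset β) ≤ S.map f →
      ∃ ls' : List (List (ℤ × α)), ls'.map (List.map (Prod.map id f)) = ls ∧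
        (↑(ls'.flatten.map Prod.snd) : Multiset α) ≤ S
  | [], _, _ => ⟨[], rfl, Multiset.zero_le _⟩
  | l :: ls, S, h => by
    classical
    rw [List.flatten_cons, List.map_append, ← Multiset.coe_add] at h
    obtain ⟨l', rfl, hl'⟩ := exists_list_lift_of_le_map f l (le_of_add_le_left h)
    have hls : (↑(ls.flatten.map Prod.snd) : Multiset β) ≤ (S - ↑(l'.map Prod.snd)).map f := by
      rw [Multiset.map_tsub_of_le f hl']
      exact le_tsub_of_add_le_left (by simpa [List.map_map, Prod.map_snd'] using h)
    obtain ⟨ls', rfl, hls'⟩ := exists_lists_lift_of_le_map f ls hls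
    refine ⟨l' :: ls', rfl, ?_⟩
    rw [List.flatten_cons, List.map_append, ← Multiset.coe_add]
    exact add_le_of_le_tsub_left_of_le hl' hls'

theorem HasDisjointWZeroSubsums.exists_lift {W : Set ℤ} {B : Type*} [AddCommGroup B]
    (f : α → B) {S : Multiset α} {k : ℕ} (h : HasDisjointWZeroSubsums W (S.map f) k) :
    ∃ ls : List (List (ℤ × α)), ls.length = k ∧
      (∀ l ∈ ls, l ≠ [] ∧ (∀ p ∈ l, p.1 ∈ W) ∧ (l.map fun p => p.1 • f p.2).sum = 0) ∧
      (↑(ls.flatten.map Prod.snd) : Multiset α) ≤ S := by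
  obtain ⟨ls, rfl, hls, hle⟩ := h
  obtain ⟨ls', rfl, hle'⟩ := exists_lists_lift_of_le_map f ls hle
  refine ⟨ls', (List.length_map _).symm, fun l hl => ?_, hle'⟩
  obtain ⟨hne, hW, hsum⟩ := hls _ (List.mem_map_of_mem hl)
  exact ⟨by simpa using hne, fun p hp => by simpa using hW _ (List.mem_map_of_mem hp),
    by simpa [List.map_map, Function.comp_def] using hsum⟩

end Lift

section Existence

variable {W : Set ℤ} {G : Type*} [AddCommGroup G]

theorem HasDisjointWZeroSubsums.mono {S T : Multiset G} {m : ℕ}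
    (h : HasDisjointWZeroSubsums W S m) (hST : S ≤ T) : HasDisjointWZeroSubsums W T m :=
  let ⟨ls, hlen, hls, hle⟩ := h
  ⟨ls, hlen, hls, hle.trans hST⟩

theorem HasDisjointWZeroSubsums.add {S T : Multiset G} {m n : ℕ}
    (hS : HasDisjointWZeroSubsums W S m) (hT : HasDisjointWZeroSubsums W T n) :
    HasDisjointWZeroSubsums W (S + T) (m + n) := by
  obtain ⟨ls, rfl, hls, hle⟩ := hS
  obtain ⟨ls', rfl, hls', hle'⟩ := hT
  refine ⟨ls ++ ls', List.length_append, fun l hl => ?_, ?_⟩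
  · exact (List.mem_append.mp hl).elim (hls l) (hls' l)
  · simpa using add_le_add hle hle'

theorem hasDisjointWZeroSubsums_replicate_exponent [Finite G] {w : ℤ} (hw : w ∈ W) (g : G) :
    HasDisjointWZeroSubsums W (Multiset.replicate (AddMonoid.exponent G) g) 1 := by
  refine ⟨[List.replicate (AddMonoid.exponent G) (w, g)], rfl, ?_,
    by simp [Multiset.coe_replicate]⟩
  simp [AddMonoid.exponent_ne_zero_of_finite, hw, smul_comm _ w g,
    AddMonoid.exponent_nsmul_eq_zero]

theorem Multiset.exists_le_count_of_mul_le_card {α : Type*} [Fintype α] [Nonempty α]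
    [DecidableEq α] {S : Multiset α} {n : ℕ} (h : Fintype.card α * n ≤ Multiset.card S) :
    ∃ a, n ≤ S.count a := by
  obtain ⟨a, -, ha⟩ := Finset.exists_le_of_sum_le (f := fun _ => n) (g := S.count)
    Finset.univ_nonempty (by simpa [mul_comm] using h)
  exact ⟨a, ha⟩

theorem hasDisjointWZeroSubsums_of_mul_le_card [Finite G] (hW : W.Nonempty) (m : ℕ)
    {S : Multiset G} (hS : m * (Nat.card G * AddMonoid.exponent G) ≤ Multiset.card S) :
    HasDisjointWZeroSubsums W S m := by
  classical
  have := Fintype.ofFinite G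
  obtain ⟨w, hw⟩ := hW
  induction m generalizing S with
  | zero => exact ⟨[], rfl, by simp, by simp⟩
  | succ m ih =>
    set e := AddMonoid.exponent G
    have he : e ≤ Nat.card G * e := Nat.le_mul_of_pos_left e Nat.card_pos
    have hsucc := add_one_mul m (Nat.card G * e)
    obtain ⟨g, hg⟩ := Multiset.exists_le_count_of_mul_le_card (n := e) (S := S)
      (by rw [← Nat.card_eq_fintype_card]; omega)
    have hrep := Multiset.le_count_iff_replicate_le.mp hg
    rw [← add_tsub_cancel_of_le hrep, add_comm m]
    refine (hasDisjointWZeroSubsums_replicate_exponent hw g).add (ih ?_)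
    rw [Multiset.card_sub hrep, Multiset.card_replicate]
    omega

theorem hasDisjointWZeroSubsums_of_DW_le_card [Finite G] (hW : W.Nonempty) {m : ℕ}
    {S : Multiset G} (hS : DW W G m ≤ Multiset.card S) : HasDisjointWZeroSubsums W S m :=
  Nat.sInf_mem (s := {n | ∀ S : Multiset G, n ≤ Multiset.card S →
      HasDisjointWZeroSubsums W S m})
    ⟨_, fun _ => hasDisjointWZeroSubsums_of_mul_le_card hW m⟩ S hS

end Existence

section Quotient

variable {W : Set ℤ} {G : Type*} [AddCommGroup G]

theorem MulClosedMod.exists_zsmul_eq (hmul : MulClosedMod W (AddMonoid.exponent G))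
    {v w : ℤ} (hv : v ∈ W) (hw : w ∈ W) : ∃ u ∈ W, ∀ g : G, u • g = (v * w) • g := by
  obtain ⟨u, hu, k, hk⟩ := hmul v hv w hw
  refine ⟨u, hu, fun g => ?_⟩
  rw [show v * w = u + AddMonoid.exponent G * k by linarith, add_smul, mul_comm, mul_smul,
    natCast_zsmul, AddMonoid.exponent_nsmul_eq_zero, smul_zero, add_zero]

theorem MulClosedMod.exists_flatMap_weights {ι : Type*}
    (hmul : MulClosedMod W (AddMonoid.exponent G)) (block : ι → List (ℤ × G))
    (b : List (ℤ × ι)) (hb : ∀ q ∈ b, q.1 ∈ W ∧ ∀ p ∈ block q.2, p.1 ∈ W) :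
    ∃ l : List (ℤ × G), l.map Prod.snd = b.flatMap (fun q => (block q.2).map Prod.snd) ∧
      (∀ p ∈ l, p.1 ∈ W) ∧
      (l.map fun p => p.1 • p.2).sum =
        (b.map fun q => q.1 • ((block q.2).map fun p => p.1 • p.2).sum).sum := by
  choose! u huW hu using fun v (hv : v ∈ W) w (hw : w ∈ W) =>
    hmul.exists_zsmul_eq (G := G) hv hw
  refine ⟨b.flatMap fun q => (block q.2).map fun p => (u q.1 p.1, p.2),
    by simp [List.map_flatMap, Function.comp_def], ?_, ?_⟩
  · simp only [List.mem_flatMap, List.mem_map]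
    rintro _ ⟨q, hq, p, hp, rfl⟩
    exact huW _ (hb q hq).1 _ ((hb q hq).2 p hp)
  · rw [List.map_flatMap, List.flatMap_def, List.sum_flatten, List.map_map]
    refine congrArg List.sum (List.map_congr_left fun q hq => ?_)
    rw [List.smul_sum, Function.comp_apply, List.map_map, List.map_map]
    refine congrArg List.sum (List.map_congr_left fun p hp => ?_)
    simp [hu _ (hb q hq).1 _ ((hb q hq).2 p hp), mul_smul]

theorem hasDisjointWZeroSubsums_of_blocks (hmul : MulClosedMod W (AddMonoid.exponent G))
    {H : AddSubgroup G} {k m : ℕ}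
    (hH : ∀ T : Multiset H, k ≤ Multiset.card T → HasDisjointWZeroSubsums W T m)
    {ls : List (List (ℤ × G))} (hk : k ≤ ls.length)
    (hls : ∀ l ∈ ls, l ≠ [] ∧ (∀ p ∈ l, p.1 ∈ W) ∧ (l.map fun p => p.1 • p.2).sum ∈ H) :
    HasDisjointWZeroSubsums W (↑(ls.flatten.map Prod.snd) : Multiset G) m := by
  let F : {l // l ∈ ls} → H := fun l => ⟨_, (hls l.1 l.2).2.2⟩
  obtain ⟨ms, hlen, hms, hle⟩ :=
    (hH ((↑ls.attach : Multiset _).map F) (by simpa using hk)).exists_lift F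
  choose! c hcsupp hcW hcsum using fun b (hb : b ∈ ms) =>
    hmul.exists_flatMap_weights Subtype.val b fun q hq =>
      ⟨(hms b hb).2.1 q hq, (hls q.2.1 q.2.2).2.1⟩
  refine ⟨ms.map c, by simpa using hlen, fun l hl => ?_, ?_⟩
  · obtain ⟨b, hb, rfl⟩ := List.mem_map.mp hl
    obtain ⟨hne, -, hsum⟩ := hms b hb
    refine ⟨fun hnil => ?_, hcW b hb, ?_⟩
    · have hflat := hcsupp b hb
      rw [hnil, List.map_nil, eq_comm, List.flatMap_eq_nil_iff] at hflat
      obtain ⟨q, hq⟩ := List.exists_mem_of_ne_nil b hne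
      exact (hls q.2.1 q.2.2).1 (List.map_eq_nil_iff.mp (hflat q hq))
    · rw [hcsum b hb]
      simpa [F, Function.comp_def] using congrArg Subtype.val hsum
  · have hsupp : (ms.map c).flatten.map Prod.snd
        = (ms.flatten.map Prod.snd).flatMap fun l => l.1.map Prod.snd := by
      rw [List.map_flatten, List.map_map,
        List.map_congr_left (f := List.map Prod.snd ∘ c) hcsupp]
      simp only [List.flatMap_def, List.map_flatten, List.flatten_flatten, List.map_map]
      exact congrArg List.flatten
        (List.map_congr_left fun b _ => by simp [List.flatMap_def, Function.comp_def])
    let supp : {l // l ∈ ls} → Multiset G := fun l => ↑(l.1.map Prod.snd)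
    calc (↑((ms.map c).flatten.map Prod.snd) : Multiset G)
        = (↑(ms.flatten.map Prod.snd) : Multiset _).bind supp := by
          rw [hsupp, Multiset.coe_bind]
      _ ≤ (↑ls.attach : Multiset _).bind supp := Multiset.bind_le_bind_of_le _ hle
      _ = ↑(ls.flatten.map Prod.snd) := by
          rw [Multiset.coe_bind]
          simp [List.flatMap_def, List.map_flatten]

theorem hasDisjointWZeroSubsums_of_map_mk (hmul : MulClosedMod W (AddMonoid.exponent G))
    {H : AddSubgroup G} {k m : ℕ}
    (hH : ∀ T : Multiset H, k ≤ Multiset.card T → HasDisjointWZeroSubsums W T m)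
    {S : Multiset G} (hS : HasDisjointWZeroSubsums W (S.map (QuotientAddGroup.mk' H)) k) :
    HasDisjointWZeroSubsums W S m := by
  obtain ⟨ls, hlen, hls, hle⟩ := hS.exists_lift (QuotientAddGroup.mk' H)
  refine (hasDisjointWZeroSubsums_of_blocks hmul hH hlen.ge fun l hl => ?_).mono hle
  obtain ⟨hne, hW, hsum⟩ := hls l hl
  refine ⟨hne, hW, ?_⟩
  rw [← QuotientAddGroup.eq_zero_iff, ← hsum, ← QuotientAddGroup.mk'_apply, map_list_sum,
    List.map_map]
  simp [Function.comp_def]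

end Quotient

theorem stmt7_general {G : Type*} [AddCommGroup G] [Fintype G] (W : Set ℤ) (hW : W.Nonempty)
    (H : AddSubgroup G) (m : ℕ)
    (hmul : MulClosedMod W (AddMonoid.exponent G)) :
    DW W G m ≤ DW W (G ⧸ H) (DW W (↥H) m) := by
  refine Nat.sInf_le fun S hS => ?_
  have hH : ∀ T : Multiset H, DW W H m ≤ Multiset.card T → HasDisjointWZeroSubsums W T m :=
    fun T => hasDisjointWZeroSubsums_of_DW_le_card hW
  exact hasDisjointWZeroSubsums_of_map_mk hmul hH
    (hasDisjointWZeroSubsums_of_DW_le_card hW (by rwa [Multiset.card_map]))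

/-- if `W` is multiplicatively closed modulo `exp(G)` then
`D_{W,m}(G) ≤ D_{W,D_{W,m}(H)}(G/H)`. -/
theorem stmt7 {G : Type*} [AddCommGroup G] [Fintype G] (W : Set ℤ) (hW : W.Nonempty)
    (H : AddSubgroup G) (m : ℕ) (hm : 1 ≤ m)
    (hmul : MulClosedMod W (AddMonoid.exponent G)) :
    DW W G m ≤ DW W (G ⧸ H) (DW W (↥H) m) :=
  stmt7_general W hW H m hmul
end

section
/- Let G be a finite abelian group, H a subgroup of G, and let W ⊆ ℤ be a nonempty set of weights that is multiplicatively closed modulo exp(G). Let L₁, L₂ ⊆ ℕ be nonempty subsets with L₂ finite, and set L := ∪_{l∈L₁} l·L₂, where l·L₂ denotes the l-fold sumset of L₂. Then s_{W,L}(G) ≤ (max L₂)·(s_{W,L₁}(H) − 1) + s_{W,L₂}(G/H) (with the convention that the right-hand side is ∞ if s_{W,L₁}(H) or s_{W,L₂}(G/H) is ∞). -/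
open scoped BigOperators

/-!
Let `n₁ = s_{W,L₁}(H)`, `n₂ = s_{W,L₂}(G/H)` and `d = max L₂`. From a sequence `S` over `G` of
length at least `d (n₁ - 1) + n₂`, extract greedily `n₁` disjoint blocks, each a `W`-weighted sum
of length in `L₂` that lies in `H`. The block sums form a sequence of length `n₁` over `H`, so some
`l ∈ L₁` of them admit a `W`-weighted zero-sum `∑ cᵢ hᵢ = 0`. Multiplying the weights of the
`i`-th block by `cᵢ`, and replacing each product by an element of `W` congruent to it modulo
`exp(G)`, then concatenating these blocks, gives a `W`-weighted zero-subsum of `S` whose length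
is a sum of `l` elements of `L₂`.
-/
section WeightedSums

variable {G : Type*} [AddCommGroup G]

def wsum (l : List (ℤ × G)) : G :=
  (l.map fun p => p.1 • p.2).sum

@[simp]
lemma wsum_nil : wsum ([] : List (ℤ × G)) = 0 := rfl

@[simp]
lemma wsum_cons (p : ℤ × G) (l : List (ℤ × G)) : wsum (p :: l) = p.1 • p.2 + wsum l :=
  List.sum_cons

@[simp]
lemma wsum_append (l₁ l₂ : List (ℤ × G)) : wsum (l₁ ++ l₂) = wsum l₁ + wsum l₂ := by
  simp [wsum]

lemma map_wsum {G' : Type*} [AddCommGroup G'] (f : G →+ G') (l : List (ℤ × G)) :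
    f (wsum l) = wsum (l.map (Prod.map id f)) := by
  induction l with
  | nil => simp
  | cons p l ih => simp [ih]

lemma List.exists_lift_of_coe_map_snd_le {α β γ : Type*} (f : α → β) (l' : List (γ × β))
    (S : Multiset α) (h : (↑(l'.map Prod.snd) : Multiset β) ≤ S.map f) :
    ∃ l : List (γ × α), l.map (Prod.map id f) = l' ∧ (↑(l.map Prod.snd) : Multiset α) ≤ S := by
  classical
  induction l' generalizing S with
  | nil => exact ⟨[], rfl, by simp⟩
  | cons p l' ih =>
    obtain ⟨c, b⟩ := p
    obtain ⟨a, haS, rfl⟩ : ∃ a ∈ S, f a = b :=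
      Multiset.mem_map.mp (Multiset.mem_of_le h (by simp))
    rw [← Multiset.cons_erase haS, Multiset.map_cons, List.map_cons, ← Multiset.cons_coe,
      Multiset.cons_le_cons_iff] at h
    obtain ⟨l, rfl, hl⟩ := ih (S.erase a) h
    refine ⟨(c, a) :: l, rfl, ?_⟩
    simpa only [List.map_cons, ← Multiset.cons_coe, Multiset.cons_erase haS] using
      Multiset.cons_le_cons a hl

lemma Multiset.coe_flatten_le_coe_flatten {α : Type*} {ll ll' : List (List α)}
    (h : (↑ll : Multiset (List α)) ≤ ↑ll') : (↑ll.flatten : Multiset α) ≤ ↑ll'.flatten := by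
  obtain ⟨l, hperm, hsub⟩ := Multiset.coe_le.mp h
  exact Multiset.coe_le.mpr ⟨l.flatten, hperm.flatten, hsub.flatten⟩

section Reweight

variable {W : Set ℤ} (hW : MulClosedMod W (AddMonoid.exponent G))
include hW

lemma exists_wsum_eq_zsmul_wsum {c : ℤ} (hc : c ∈ W) (b : List (ℤ × G))
    (hb : ∀ p ∈ b, p.1 ∈ W) :
    ∃ b' : List (ℤ × G), b'.map Prod.snd = b.map Prod.snd ∧ (∀ p ∈ b', p.1 ∈ W) ∧
      wsum b' = c • wsum b := by
  induction b with
  | nil => exact ⟨[], rfl, by simp, by simp⟩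
  | cons p b ih =>
    obtain ⟨u, hu, hdvd⟩ := hW c hc p.1 (hb p (by simp))
    obtain ⟨b', hsnd, hb'W, hsum⟩ := ih fun q hq => hb q (by simp [hq])
    refine ⟨(u, p.2) :: b', by simp [hsnd], ?_, ?_⟩
    · simpa [hu] using hb'W
    · rw [wsum_cons, wsum_cons, hsum, smul_add, smul_smul,
        (AddGroup.exponent_dvd_sub_iff_zsmul_eq_zsmul.mp hdvd p.2)]

lemma exists_wsum_eq_sum_zsmul_wsum (l : List (ℤ × List (ℤ × G)))
    (hl : ∀ p ∈ l, p.1 ∈ W ∧ ∀ q ∈ p.2, q.1 ∈ W) :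
    ∃ l' : List (ℤ × G), l'.map Prod.snd = (l.map Prod.snd).flatten.map Prod.snd ∧
      (∀ p ∈ l', p.1 ∈ W) ∧ wsum l' = (l.map fun p => p.1 • wsum p.2).sum := by
  induction l with
  | nil => exact ⟨[], rfl, by simp, by simp⟩
  | cons p l ih =>
    obtain ⟨hpW, hp₂W⟩ := hl p (by simp)
    obtain ⟨b, hbsnd, hbW, hbsum⟩ := exists_wsum_eq_zsmul_wsum hW hpW p.2 hp₂W
    obtain ⟨l', hsnd, hl'W, hsum⟩ := ih fun q hq => hl q (by simp [hq])
    refine ⟨b ++ l', by simp [hbsnd, hsnd], ?_, ?_⟩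
    · intro q hq
      rcases List.mem_append.mp hq with hq | hq
      exacts [hbW q hq, hl'W q hq]
    · rw [wsum_append, hbsum, hsum, List.map_cons, List.sum_cons]

end Reweight

def IsWZeroSumMod (W : Set ℤ) (H : AddSubgroup G) (L : Set ℕ) (b : List (ℤ × G)) : Prop :=
  b ≠ [] ∧ (∀ p ∈ b, p.1 ∈ W) ∧ b.length ∈ L ∧ wsum b ∈ H

section Blocks

variable {W : Set ℤ} {H : AddSubgroup G} {L : Set ℕ}

lemma exists_isWZeroSumMod_of_map_mk {S : Multiset G}
    (h : HasWZeroSubsumLen W (S.map (QuotientAddGroup.mk : G → G ⧸ H)) L) :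
    ∃ b, IsWZeroSumMod W H L b ∧ (↑(b.map Prod.snd) : Multiset G) ≤ S := by
  obtain ⟨l', ⟨hne, hW, hle, hsum⟩, hlen⟩ := h
  obtain ⟨b, rfl, hb⟩ := List.exists_lift_of_coe_map_snd_le _ l' S hle
  refine ⟨b, ⟨?_, fun p hp => hW _ (List.mem_map_of_mem hp), by simpa using hlen, ?_⟩, hb⟩
  · rintro rfl
    exact hne rfl
  · rw [← QuotientAddGroup.eq_zero_iff]
    exact (map_wsum (QuotientAddGroup.mk' H) b).trans hsum

lemma exists_list_isWZeroSumMod {n d : ℕ} (hd : ∀ t ∈ L, t ≤ d)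
    (hn : ∀ T : Multiset (G ⧸ H), n ≤ Multiset.card T → HasWZeroSubsumLen W T L) (k : ℕ)
    (S : Multiset G) (hS : d * k + n ≤ Multiset.card S) :
    ∃ bs : List (List (ℤ × G)), bs.length = k + 1 ∧ (∀ b ∈ bs, IsWZeroSumMod W H L b) ∧
      (↑(bs.flatten.map Prod.snd) : Multiset G) ≤ S := by
  classical
  have hblock (S : Multiset G) (hS : n ≤ Multiset.card S) :=
    exists_isWZeroSumMod_of_map_mk (hn (S.map QuotientAddGroup.mk) (by simpa using hS))
  induction k generalizing S with
  | zero =>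
    obtain ⟨b, hb, hbS⟩ := hblock S (le_of_add_le_right hS)
    exact ⟨[b], rfl, by simpa using hb, by simpa using hbS⟩
  | succ k ih =>
    obtain ⟨b, hb, hbS⟩ := hblock S (le_of_add_le_right hS)
    have hbd := hd _ hb.2.2.1
    obtain ⟨bs, hlen, hbs, hbsS⟩ := ih (S - (↑(b.map Prod.snd) : Multiset G)) (by
      rw [Multiset.card_sub hbS, Multiset.coe_card, List.length_map, Nat.mul_succ] at *
      omega)
    refine ⟨b :: bs, by simp [hlen], by simpa using ⟨hb, hbs⟩, ?_⟩
    rw [List.flatten_cons, List.map_append, ← Multiset.coe_add]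
    exact (add_le_add_right hbsS _).trans (add_tsub_cancel_of_le hbS).le

end Blocks

lemma List.sum_mem_setOf_fin_sum {L₁ L₂ : Set ℕ} (xs : List ℕ) (hxs : ∀ x ∈ xs, x ∈ L₂)
    (hlen : xs.length ∈ L₁) :
    xs.sum ∈ {t : ℕ | ∃ l ∈ L₁, ∃ f : Fin l → ℕ, (∀ i, f i ∈ L₂) ∧ ∑ i, f i = t} :=
  ⟨xs.length, hlen, fun i => xs[(i : ℕ)], fun i => hxs _ (List.getElem_mem _), by
    rw [← List.sum_ofFn, List.ofFn_getElem]⟩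

lemma exists_zsmul_wsum_sum_eq_zero {W : Set ℤ} {H : AddSubgroup G} {L : Set ℕ} {n : ℕ}
    (hn : ∀ T : Multiset H, n ≤ Multiset.card T → HasWZeroSubsumLen W T L)
    (bs : List (List (ℤ × G))) (hbs : ∀ b ∈ bs, wsum b ∈ H) (hlen : n ≤ bs.length) :
    ∃ l : List (ℤ × List (ℤ × G)), l ≠ [] ∧ (∀ p ∈ l, p.1 ∈ W) ∧
      (↑(l.map Prod.snd) : Multiset (List (ℤ × G))) ≤ ↑bs ∧ l.length ∈ L ∧
      (l.map fun p => p.1 • wsum p.2).sum = 0 := by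
  let F : {b // b ∈ bs} → H := fun b => ⟨wsum b.1, hbs b.1 b.2⟩
  obtain ⟨l₁, ⟨hne, hW, hle, hsum⟩, hlen₁⟩ := hn ↑(bs.attach.map F) (by simpa using hlen)
  obtain ⟨l, rfl, hl⟩ := List.exists_lift_of_coe_map_snd_le F l₁ ↑bs.attach (by simpa using hle)
  refine ⟨l.map (Prod.map id Subtype.val), by simpa using hne, ?_, ?_, by simpa using hlen₁, ?_⟩
  · simp only [List.mem_map]
    rintro _ ⟨p, hp, rfl⟩
    exact hW _ (List.mem_map_of_mem hp)
  · simpa [List.map_map, Function.comp_def] using Multiset.map_le_map (f := Subtype.val) hl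
  · have hcoe := map_wsum H.subtype (l.map (Prod.map id F))
    rw [show wsum (l.map (Prod.map id F)) = 0 from hsum, map_zero] at hcoe
    rw [hcoe]
    simp [wsum, F, List.map_map, Function.comp_def]

theorem hasWZeroSubsumLen_of_le_card {W : Set ℤ} (hW : MulClosedMod W (AddMonoid.exponent G))
    {H : AddSubgroup G} {L₁ L₂ : Set ℕ} {n₁ n₂ d : ℕ} (hd : ∀ t ∈ L₂, t ≤ d)
    (hn₁ : ∀ T : Multiset H, n₁ ≤ Multiset.card T → HasWZeroSubsumLen W T L₁)
    (hn₂ : ∀ T : Multiset (G ⧸ H), n₂ ≤ Multiset.card T → HasWZeroSubsumLen W T L₂)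
    (S : Multiset G) (hS : d * (n₁ - 1) + n₂ ≤ Multiset.card S) :
    HasWZeroSubsumLen W S {t | ∃ l ∈ L₁, ∃ f : Fin l → ℕ, (∀ i, f i ∈ L₂) ∧ ∑ i, f i = t} := by
  obtain ⟨bs, hlen, hbs, hbsS⟩ := exists_list_isWZeroSumMod hd hn₂ (n₁ - 1) S hS
  obtain ⟨l₂, hne, hW₂, hle₂, hlen₂, hsum₂⟩ :=
    exists_zsmul_wsum_sum_eq_zero hn₁ bs (fun b hb => (hbs b hb).2.2.2) (by omega)
  have hmem (p) (hp : p ∈ l₂) : p.2 ∈ bs :=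
    Multiset.mem_coe.mp (Multiset.mem_of_le hle₂ (List.mem_map_of_mem (f := Prod.snd) hp))
  obtain ⟨l, hlsnd, hlW, hlsum⟩ := exists_wsum_eq_sum_zsmul_wsum hW l₂
    fun p hp => ⟨hW₂ p hp, (hbs _ (hmem p hp)).2.1⟩
  have hl : l.length = (l₂.map fun p => p.2.length).sum := by
    simpa [List.length_flatten, List.map_map, Function.comp_def] using congrArg List.length hlsnd
  refine ⟨l, ⟨?_, hlW, ?_, hlsum.trans hsum₂⟩, ?_⟩
  · obtain ⟨p, hp⟩ := List.exists_mem_of_ne_nil l₂ hne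
    refine List.ne_nil_of_length_pos (hl ▸ ?_)
    exact (List.length_pos_of_ne_nil (hbs _ (hmem p hp)).1).trans_le
      (List.le_sum_of_mem (List.mem_map_of_mem hp))
  · rw [hlsnd]
    simp only [← Multiset.map_coe]
    exact (Multiset.map_le_map (Multiset.coe_flatten_le_coe_flatten hle₂)).trans hbsS
  · rw [hl]
    refine List.sum_mem_setOf_fin_sum _ ?_ (by simpa using hlen₂)
    simp only [List.mem_map]
    rintro _ ⟨p, hp, rfl⟩
    exact (hbs _ (hmem p hp)).2.2.1

lemma sWL_le_of_forall {W : Set ℤ} {L : Set ℕ} {n : ℕ}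
    (h : ∀ S : Multiset G, n ≤ Multiset.card S → HasWZeroSubsumLen W S L) : sWL W G L ≤ n :=
  sInf_le ⟨n, rfl, h⟩

variable (G) in
lemma sWL_eq_top_or_exists (W : Set ℤ) (L : Set ℕ) :
    sWL W G L = ⊤ ∨ ∃ n : ℕ, sWL W G L = n ∧
      ∀ S : Multiset G, n ≤ Multiset.card S → HasWZeroSubsumLen W S L := by
  rcases Set.eq_empty_or_nonempty {N : ℕ∞ | ∃ n : ℕ, N = (n : ℕ∞) ∧
      ∀ S : Multiset G, n ≤ Multiset.card S → HasWZeroSubsumLen W S L} with h | h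
  · left
    rw [sWL, h, sInf_empty]
  · right
    obtain ⟨n, hn, hS⟩ := csInf_mem h
    exact ⟨n, hn, hS⟩

end WeightedSums

theorem stmt8_general {G : Type*} [AddCommGroup G] (W : Set ℤ)
    (H : AddSubgroup G) (hmul : MulClosedMod W (AddMonoid.exponent G)) (L₁ : Set ℕ)
    (L₂ : Finset ℕ) (hL₂ : L₂.Nonempty) (hL₂pos : 0 ∉ L₂) :
    sWL W G {t : ℕ | ∃ l ∈ L₁, ∃ f : Fin l → ℕ, (∀ i, f i ∈ L₂) ∧ ∑ i, f i = t} ≤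
      ((L₂.max' hL₂ : ℕ) : ℕ∞) * (sWL W (↥H) L₁ - 1) + sWL W (G ⧸ H) (↑L₂ : Set ℕ) := by
  set d := L₂.max' hL₂
  rcases sWL_eq_top_or_exists (G ⧸ H) W L₂ with h₂ | ⟨n₂, h₂, hn₂⟩
  · simp [h₂]
  rcases sWL_eq_top_or_exists H W L₁ with h₁ | ⟨n₁, h₁, hn₁⟩
  · have hd : (d : ℕ∞) ≠ 0 := Nat.cast_ne_zero.mpr fun h => hL₂pos (h ▸ L₂.max'_mem hL₂)
    simp [h₁, ENat.mul_top hd]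
  rw [h₁, h₂]
  calc _ ≤ ((d * (n₁ - 1) + n₂ : ℕ) : ℕ∞) :=
        sWL_le_of_forall (hasWZeroSubsumLen_of_le_card hmul (fun t ht => L₂.le_max' t ht) hn₁ hn₂)
    _ = _ := by push_cast [ENat.natCast_sub]; rfl

/-- for `W` multiplicatively closed modulo `exp(G)` and nonempty sets
of positive integers `L₁`, `L₂` with `L₂` finite, setting `L = ∪_{l ∈ L₁} l·L₂`
(the union of `l`-fold sumsets of `L₂`),
`s_{W,L}(G) ≤ (max L₂)(s_{W,L₁}(H) - 1) + s_{W,L₂}(G/H)` (in `ℕ∞`). -/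
theorem stmt8 {G : Type*} [AddCommGroup G] [Fintype G] (W : Set ℤ) (hW : W.Nonempty)
    (H : AddSubgroup G) (hmul : MulClosedMod W (AddMonoid.exponent G))
    (L₁ : Set ℕ) (hL₁ : L₁.Nonempty) (hL₁pos : 0 ∉ L₁)
    (L₂ : Finset ℕ) (hL₂ : L₂.Nonempty) (hL₂pos : 0 ∉ L₂) :
    sWL W G {t : ℕ | ∃ l ∈ L₁, ∃ f : Fin l → ℕ, (∀ i, f i ∈ L₂) ∧ ∑ i, f i = t} ≤
      ((L₂.max' hL₂ : ℕ) : ℕ∞) * (sWL W (↥H) L₁ - 1) + sWL W (G ⧸ H) (↑L₂ : Set ℕ) :=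
  stmt8_general W H hmul L₁ L₂ hL₂ hL₂pos
end
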